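/- arXiv:1907.13617 — 2 statements merged into one kernel-verified Lean document; each statement's English description precedes it below -/
import Mathlib

section
/- Let K be a number field of degree n over Q with ring of integers O, and let m = ⌈(n+1)/2⌉. If ω_1, ..., ω_m are elements of O that are linearly independent over Q, then the m² products ω_i ω_j (1 ≤ i, j ≤ m) span K as a Q-vector space (equivalently, they generate a Z-submodule of O of rank n). -/
open Module

theorem stmt_3 (K : Type*) [Field K] [NumberField K] (n m : ℕ)
    (hn : n = finrank ℚ K) (hm : m = (n + 2) / 2)
    (ω : Fin m → NumberField.RingOfIntegers K)
    (hind : LinearIndependent ℚ (fun i => (ω i : K))) :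
    Submodule.span ℚ {x : K | ∃ i j, x = (ω i : K) * (ω j : K)} = ⊤ := by
  by_contra hS
  obtain ⟨f, hf0, hf⟩ := Submodule.exists_dual_map_eq_bot_of_lt_top
    (lt_top_iff_ne_top.2 hS) inferInstance
  have hf' : ∀ x ∈ Submodule.span ℚ {x : K | ∃ i j, x = (ω i : K) * (ω j : K)}, f x = 0 := by
    intro x hx
    have : f x ∈ (⊥ : Submodule ℚ ℚ) := hf ▸ Submodule.mem_map_of_mem hx
    simpa using this
  set g : Fin m → Module.Dual ℚ K := fun i => f.comp (LinearMap.mulLeft ℚ ((ω i : K))) with hg_def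
  -- g is linearly independent
  have hg : LinearIndependent ℚ g := by
    rw [Fintype.linearIndependent_iff]
    intro c hc
    have key : ∀ x : K, f ((∑ i, c i • (ω i : K)) * x) = 0 := by
      intro x
      have h := congrFun (congrArg (DFunLike.coe) hc) x
      simp only [LinearMap.coe_sum, Finset.sum_apply, LinearMap.smul_apply,
        LinearMap.zero_apply, hg_def, LinearMap.comp_apply, LinearMap.mulLeft_apply,
        smul_eq_mul] at h
      rw [Finset.sum_mul]
      rw [map_sum]
      simpa [smul_mul_assoc] using h
    have ha : (∑ i, c i • (ω i : K)) = 0 := by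
      by_contra ha
      apply hf0
      ext y
      have := key ((∑ i, c i • (ω i : K))⁻¹ * y)
      rwa [← mul_assoc, mul_inv_cancel₀ ha, one_mul] at this
    exact Fintype.linearIndependent_iff.1 hind c ha
  -- each g i annihilates the span of the ω's
  set W : Submodule ℚ K := Submodule.span ℚ (Set.range fun i => (ω i : K)) with hW_def
  have hgW : ∀ i, g i ∈ W.dualAnnihilator := by
    intro i
    rw [Submodule.mem_dualAnnihilator]
    intro w hw
    have : W ≤ LinearMap.ker (g i) := by
      rw [Submodule.span_le]
      rintro _ ⟨j, rfl⟩
      simp only [SetLike.mem_coe, LinearMap.mem_ker, hg_def, LinearMap.comp_apply,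
        LinearMap.mulLeft_apply]
      exact hf' _ (Submodule.subset_span ⟨i, j, rfl⟩)
    exact this hw
  set g' : Fin m → W.dualAnnihilator := fun i => ⟨g i, hgW i⟩ with hg'_def
  have hg' : LinearIndependent ℚ g' :=
    LinearIndependent.of_comp W.dualAnnihilator.subtype hg
  have hcard : m ≤ finrank ℚ W.dualAnnihilator := by
    simpa using hg'.fintype_card_le_finrank
  have hWrank : finrank ℚ W = m := by
    rw [hW_def, finrank_span_eq_card hind, Fintype.card_fin]
  have hannrank : finrank ℚ W.dualAnnihilator = finrank ℚ (K ⧸ W) :=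
    (LinearEquiv.finrank_eq (Subspace.quotEquivAnnihilator W)).symm
  have hquot : finrank ℚ (K ⧸ W) + finrank ℚ W = finrank ℚ K :=
    Submodule.finrank_quotient_add_finrank W
  rw [hannrank] at hcard
  omega
end

section
/- Let K be a field, V an n-dimensional K-vector space, and W ⊆ V a subspace of dimension m with 2m > n. Suppose B is a K-bilinear map V × V → V that is nondegenerate in the sense that B(v, ·) is injective for every nonzero v (e.g., multiplication in a field extension). Then the set {B(w, w') : w, w' ∈ W} spans V. -/
open Module

theorem stmt_4 (K : Type*) [Field K] (V : Type*) [AddCommGroup V] [Module K V]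
    [FiniteDimensional K V] (n m : ℕ) (hn : n = finrank K V)
    (B : V →ₗ[K] V →ₗ[K] V)
    (hB : ∀ v : V, v ≠ 0 → Function.Injective (B v))
    (W : Submodule K V) (hm : m = finrank K W) (h2m : 2 * m > n) :
    Submodule.span K {x : V | ∃ w ∈ W, ∃ w' ∈ W, x = B w w'} = ⊤ := by
  set S := Submodule.span K {x : V | ∃ w ∈ W, ∃ w' ∈ W, x = B w w'} with hS
  by_contra hne
  obtain ⟨f, hf0, hfS⟩ := S.exists_dual_map_eq_bot_of_lt_top (lt_top_iff_ne_top.mpr hne)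
    inferInstance
  have hfS' : ∀ x ∈ S, f x = 0 := by
    intro x hx
    have : f x ∈ S.map f := Submodule.mem_map_of_mem hx
    rwa [hfS, Submodule.mem_bot] at this
  -- Φ w = f ∘ₗ B w
  set Φ : V →ₗ[K] Module.Dual K V := (LinearMap.llcomp K V V K f).comp B with hΦ
  -- Φ restricted to W lands in the dual annihilator of W
  have hrange : ∀ w : W, Φ w ∈ W.dualAnnihilator := by
    intro w
    rw [Submodule.mem_dualAnnihilator]
    intro w' hw'
    apply hfS'
    exact Submodule.subset_span ⟨w, w.2, w', hw', rfl⟩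
  set ψ : W →ₗ[K] W.dualAnnihilator :=
    LinearMap.codRestrict W.dualAnnihilator (Φ.comp W.subtype) hrange with hψ
  have hinj : Function.Injective ψ := by
    rw [injective_iff_map_eq_zero]
    intro w hw
    by_contra hw0
    have hwne : (w : V) ≠ 0 := fun h => hw0 (Subtype.ext h)
    have hΦw : Φ (w : V) = 0 := congrArg Subtype.val hw
    have hsurj : Function.Surjective (B (w : V)) :=
      LinearMap.surjective_of_injective (hB _ hwne)
    apply hf0
    ext v
    obtain ⟨u, rfl⟩ := hsurj v
    have := DFunLike.congr_fun hΦw u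
    simpa [Φ] using this
  have h1 : m ≤ finrank K W.dualAnnihilator := by
    rw [hm]
    exact LinearMap.finrank_le_finrank_of_injective hinj
  have h2 : finrank K W + finrank K W.dualAnnihilator = finrank K V := by
    have e : finrank K (V ⧸ W) = finrank K W.dualAnnihilator :=
      (Subspace.quotEquivAnnihilator W).finrank_eq
    rw [← e, add_comm, Submodule.finrank_quotient_add_finrank]
  omega
end
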